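/- arXiv:2403.02589 — 5 statements merged into one kernel-verified Lean document; each statement's English description precedes it below -/
import Mathlib

section
/- Suppose the bounded-gradient assumption holds: ‖∇f_j(x_j^s)‖ ≤ G_max for all agents j and all iterations s. Let t⁰ be a combination time (a multiple of E), so that x_j^{t⁰} = x̄_j^{t⁰} for all j. Then for every agent j and every t with t⁰ ≤ t ≤ t⁰ + E − 1, the inexact MUSIC iterates satisfy ‖x_j^t − x̄_j^t‖ ≤ 2α(t − t⁰)G_max, where x̄_j^t = Σ_{l=1}^N w_jl x_l^t. (Paper's Lemma 2, bounded deviation.) -/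
open Finset

/-- Paper's Lemma 2 (bounded deviation for inexact MUSIC). -/
theorem inexact_music_bounded_deviation
    {N p : ℕ}
    (f : Fin N → EuclideanSpace ℝ (Fin p) → ℝ)
    (g : Fin N → EuclideanSpace ℝ (Fin p) → EuclideanSpace ℝ (Fin p))
    (W : Fin N → Fin N → ℝ)
    (hWsymm : ∀ i j, W i j = W j i)
    (hWnonneg : ∀ i j, 0 ≤ W i j)
    (hWrow : ∀ i, ∑ j, W i j = 1)
    (α : ℝ) (hα : 0 < α) (E : ℕ) (hE : 1 ≤ E)
    (x v : ℕ → Fin N → EuclideanSpace ℝ (Fin p))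
    (hv : ∀ t i, v (t + 1) i = x t i - α • g i (x t i))
    (hx1 : ∀ t i, ¬ E ∣ (t + 1) → x (t + 1) i = v (t + 1) i)
    (hx2 : ∀ t i, E ∣ (t + 1) → x (t + 1) i = ∑ j, W i j • v (t + 1) j)
    (Gmax : ℝ)
    (hG : ∀ s j, ‖g j (x s j)‖ ≤ Gmax)
    (t0 : ℕ) (ht0 : E ∣ t0)
    (hcomb : ∀ j, x t0 j = ∑ l, W j l • x t0 l)
    (t : ℕ) (ht : t0 ≤ t) (ht' : t ≤ t0 + E - 1) :
    ∀ j, ‖x t j - ∑ l, W j l • x t l‖ ≤ 2 * α * ((t - t0 : ℕ) : ℝ) * Gmax := by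
  induction t, ht using Nat.le_induction with
  | base =>
    intro j
    rw [← hcomb j, sub_self, norm_zero, Nat.sub_self]
    simp
  | succ t htt ih =>
    have htle : t ≤ t0 + E - 1 := le_trans (Nat.le_succ t) ht'
    have hndvd : ¬ E ∣ (t + 1) := by
      intro hdvd
      have h1 : E ∣ (t + 1 - t0) := Nat.dvd_sub hdvd ht0
      have h2 : 0 < t + 1 - t0 := by omega
      have := Nat.le_of_dvd h2 h1
      omega
    have hx : ∀ i, x (t+1) i = x t i - α • g i (x t i) := fun i => by
      rw [hx1 t i hndvd, hv]
    intro j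
    have hGnn : 0 ≤ Gmax := le_trans (norm_nonneg _) (hG t j)
    have key : x (t+1) j - ∑ l, W j l • x (t+1) l
        = (x t j - ∑ l, W j l • x t l)
          - α • (g j (x t j) - ∑ l, W j l • g l (x t l)) := by
      simp only [hx, smul_sub, Finset.sum_sub_distrib, Finset.smul_sum,
        smul_comm α]
      abel
    have hsum : ‖∑ l, W j l • g l (x t l)‖ ≤ Gmax := by
      calc ‖∑ l, W j l • g l (x t l)‖ ≤ ∑ l, ‖W j l • g l (x t l)‖ :=
            norm_sum_le _ _
        _ ≤ ∑ l, W j l * Gmax := by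
            refine Finset.sum_le_sum fun l _ => ?_
            rw [norm_smul, Real.norm_eq_abs, abs_of_nonneg (hWnonneg j l)]
            exact mul_le_mul_of_nonneg_left (hG t l) (hWnonneg j l)
        _ = Gmax := by rw [← Finset.sum_mul, hWrow, one_mul]
    have hbound : ‖x (t+1) j - ∑ l, W j l • x (t+1) l‖
        ≤ ‖x t j - ∑ l, W j l • x t l‖ + α * (Gmax + Gmax) := by
      rw [key]
      refine le_trans (norm_sub_le _ _) ?_
      gcongr
      rw [norm_smul, Real.norm_eq_abs, abs_of_pos hα]
      refine mul_le_mul_of_nonneg_left ?_ hα.le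
      exact le_trans (norm_sub_le _ _) (add_le_add (hG t j) hsum)
    have hcast : ((t + 1 - t0 : ℕ) : ℝ) = ((t - t0 : ℕ) : ℝ) + 1 := by
      have : t + 1 - t0 = (t - t0) + 1 := by omega
      rw [this]; push_cast; ring
    calc ‖x (t+1) j - ∑ l, W j l • x (t+1) l‖
        ≤ ‖x t j - ∑ l, W j l • x t l‖ + α * (Gmax + Gmax) := hbound
      _ ≤ 2 * α * ((t - t0 : ℕ) : ℝ) * Gmax + α * (Gmax + Gmax) :=
          add_le_add_left (ih htle j) _
      _ = 2 * α * ((t + 1 - t0 : ℕ) : ℝ) * Gmax := by rw [hcast]; ring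
end

section
/- Suppose ‖∇f_j(x_j^s)‖ ≤ G_max for all agents j and all iterations s, and suppose at the combination time t⁰ (a multiple of E) the disagreement bound ‖x_j^{t⁰} − x_i^{t⁰}‖ ≤ ε holds for all agents i, j. Then for every pair of agents i, j and every t with t⁰ ≤ t ≤ t⁰ + E − 1, the inexact MUSIC iterates satisfy ‖x_j^t − x̄_i^t‖ ≤ 4α(t − t⁰)G_max + ε, where x̄_i^t = Σ_{l=1}^N w_il x_l^t. (Paper's Lemma 3, bounded disagreement.) -/
open Finset

/-! Between two combination times the iteration consists of plain local gradient steps, so each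
iterate drifts from its value at `t⁰` by `α` times a sum of at most `t - t⁰` gradients. Two agents
therefore stay within `ε + 2α(t - t⁰)G_max` of each other, and `x_j^t - x̄_i^t = Σ_l w_il (x_j^t - x_l^t)`
is a convex combination of such differences. -/

theorem sub_smul_sum_range_of_forall_lt {R M : Type*} [Ring R] [AddCommGroup M] [Module R M]
    {y d : ℕ → M} {α : R} {k : ℕ} (h : ∀ m < k, y (m + 1) = y m - α • d m) :
    y k = y 0 - α • ∑ m ∈ range k, d m := by
  induction k with
  | zero => simp
  | succ k ih =>
    rw [h k k.lt_succ_self, ih fun m hm => h m (hm.trans k.lt_succ_self), sum_range_succ,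
      smul_add, sub_sub]

theorem norm_sub_le_of_forall_lt_of_norm_le {M : Type*} [SeminormedAddCommGroup M]
    [NormedSpace ℝ M] {y z d e : ℕ → M} {α G : ℝ} (hα : 0 ≤ α) {k : ℕ}
    (hy : ∀ m < k, y (m + 1) = y m - α • d m) (hz : ∀ m < k, z (m + 1) = z m - α • e m)
    (hd : ∀ m, ‖d m‖ ≤ G) (he : ∀ m, ‖e m‖ ≤ G) :
    ‖y k - z k‖ ≤ ‖y 0 - z 0‖ + 2 * α * k * G := by
  have hsum : ∀ {u : ℕ → M}, (∀ m, ‖u m‖ ≤ G) → ‖∑ m ∈ range k, u m‖ ≤ k * G := fun hu => by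
    simpa using norm_sum_le_of_le (range k) fun m _ => hu m
  have hdrift : y k - z k = (y 0 - z 0) - α • (∑ m ∈ range k, d m - ∑ m ∈ range k, e m) := by
    rw [sub_smul_sum_range_of_forall_lt hy, sub_smul_sum_range_of_forall_lt hz, smul_sub]
    abel
  calc ‖y k - z k‖
      ≤ ‖y 0 - z 0‖ + α * (‖∑ m ∈ range k, d m‖ + ‖∑ m ∈ range k, e m‖) := by
        rw [hdrift]
        refine (norm_sub_le _ _).trans ?_
        rw [norm_smul, Real.norm_of_nonneg hα]
        gcongr
        exact norm_sub_le _ _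
    _ ≤ ‖y 0 - z 0‖ + α * (k * G + k * G) := by gcongr <;> exact hsum ‹_›
    _ = ‖y 0 - z 0‖ + 2 * α * k * G := by ring

theorem norm_sub_sum_smul_le_of_forall_norm_sub_le {ι M : Type*} [Fintype ι]
    [SeminormedAddCommGroup M] [NormedSpace ℝ M] {w : ι → ℝ} (hw₀ : ∀ l, 0 ≤ w l)
    (hw₁ : ∑ l, w l = 1) {u : M} {z : ι → M} {C : ℝ} (hC : ∀ l, ‖u - z l‖ ≤ C) :
    ‖u - ∑ l, w l • z l‖ ≤ C := by
  have hconv : u - ∑ l, w l • z l = ∑ l, w l • (u - z l) := by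
    simp only [smul_sub, sum_sub_distrib, ← sum_smul, hw₁, one_smul]
  rw [hconv, ← mem_closedBall_zero_iff]
  exact (convex_closedBall 0 C).sum_mem (fun l _ => hw₀ l) hw₁
    fun l _ => mem_closedBall_zero_iff.2 (hC l)

theorem not_dvd_add_of_dvd_of_pos_of_lt {E t₀ n : ℕ} (ht₀ : E ∣ t₀) (hn : 0 < n) (hnE : n < E) :
    ¬ E ∣ t₀ + n :=
  (Nat.dvd_add_right ht₀).not.2 (Nat.not_dvd_of_pos_of_lt hn hnE)

theorem inexact_music_bounded_disagreement_general
    {N p : ℕ}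
    (g : Fin N → EuclideanSpace ℝ (Fin p) → EuclideanSpace ℝ (Fin p))
    (W : Fin N → Fin N → ℝ)
    (hWnonneg : ∀ i j, 0 ≤ W i j)
    (hWrow : ∀ i, ∑ j, W i j = 1)
    (α : ℝ) (hα : 0 < α) (E : ℕ)
    (x v : ℕ → Fin N → EuclideanSpace ℝ (Fin p))
    (hv : ∀ t i, v (t + 1) i = x t i - α • g i (x t i))
    (hx1 : ∀ t i, ¬ E ∣ (t + 1) → x (t + 1) i = v (t + 1) i)
    (Gmax : ℝ)
    (hG : ∀ s j, ‖g j (x s j)‖ ≤ Gmax)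
    (t0 : ℕ) (ht0 : E ∣ t0)
    (ε : ℝ)
    (hdis : ∀ i j, ‖x t0 j - x t0 i‖ ≤ ε)
    (t : ℕ) (ht : t0 ≤ t) (ht' : t ≤ t0 + E - 1) :
    ∀ i j, ‖x t j - ∑ l, W i l • x t l‖ ≤ 4 * α * ((t - t0 : ℕ) : ℝ) * Gmax + ε := by
  intro i j
  obtain ⟨k, rfl⟩ : ∃ k, t = t0 + k := ⟨t - t0, by omega⟩
  have hstep : ∀ l, ∀ m < k,
      x (t0 + (m + 1)) l = x (t0 + m) l - α • g l (x (t0 + m) l) := fun l m hm => by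
    have hno_comb : ¬ E ∣ t0 + m + 1 := by
      rw [add_assoc]
      exact not_dvd_add_of_dvd_of_pos_of_lt ht0 m.succ_pos (by omega)
    rw [← add_assoc, hx1 _ _ hno_comb, hv]
  have hGmax : 0 ≤ Gmax := (norm_nonneg _).trans (hG 0 j)
  have hclose : ∀ l, ‖x (t0 + k) j - x (t0 + k) l‖ ≤ 4 * α * k * Gmax + ε := fun l => by
    have hdrift := norm_sub_le_of_forall_lt_of_norm_le (y := fun m => x (t0 + m) j)
      (z := fun m => x (t0 + m) l) hα.le (hstep j) (hstep l) (fun m => hG _ j) (fun m => hG _ l)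
    have hslack : 0 ≤ α * k * Gmax := by positivity
    simp only [add_zero] at hdrift
    linarith [hdis l j]
  simpa using norm_sub_sum_smul_le_of_forall_norm_sub_le (hWnonneg i) (hWrow i) hclose

/-- Paper's Lemma 3 (bounded disagreement for inexact MUSIC). -/
theorem inexact_music_bounded_disagreement
    {N p : ℕ}
    (f : Fin N → EuclideanSpace ℝ (Fin p) → ℝ)
    (g : Fin N → EuclideanSpace ℝ (Fin p) → EuclideanSpace ℝ (Fin p))
    (W : Fin N → Fin N → ℝ)
    (hWsymm : ∀ i j, W i j = W j i)
    (hWnonneg : ∀ i j, 0 ≤ W i j)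
    (hWrow : ∀ i, ∑ j, W i j = 1)
    (α : ℝ) (hα : 0 < α) (E : ℕ) (hE : 1 ≤ E)
    (x v : ℕ → Fin N → EuclideanSpace ℝ (Fin p))
    (hv : ∀ t i, v (t + 1) i = x t i - α • g i (x t i))
    (hx1 : ∀ t i, ¬ E ∣ (t + 1) → x (t + 1) i = v (t + 1) i)
    (hx2 : ∀ t i, E ∣ (t + 1) → x (t + 1) i = ∑ j, W i j • v (t + 1) j)
    (Gmax : ℝ)
    (hG : ∀ s j, ‖g j (x s j)‖ ≤ Gmax)
    (t0 : ℕ) (ht0 : E ∣ t0)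
    (hcomb : ∀ j, x t0 j = ∑ l, W j l • x t0 l)
    (ε : ℝ)
    (hdis : ∀ i j, ‖x t0 j - x t0 i‖ ≤ ε)
    (t : ℕ) (ht : t0 ≤ t) (ht' : t ≤ t0 + E - 1) :
    ∀ i j, ‖x t j - ∑ l, W i l • x t l‖ ≤ 4 * α * ((t - t0 : ℕ) : ℝ) * Gmax + ε :=
  inexact_music_bounded_disagreement_general g W hWnonneg hWrow α hα E x v hv hx1 Gmax hG t0 ht0 ε
    hdis t ht ht'
end

section
/- Assume each f_i is μ-strongly convex and L-smooth, α ≤ 1/(2L), ν = √(1 − 2αλ) with λ = μL/(μ + L), and suppose E and β satisfy ν^E(1 − (βν/(1 − ν))‖Z − I‖) ≤ 1 − (βν/(1 − ν))‖Z − I‖ − β‖Z‖. Then there exists a constant Θ ≥ 0 such that the bias correction of the exact MUSIC iterates is uniformly bounded: ‖x̄_i^{t⁰} − v̄_i^{t⁰}‖ ≤ Θ for every agent i and every combination time t⁰ (multiple of E), where x̄_i^{t⁰} = Σ_j w̄_ij x_j^{t⁰} and v̄_i^{t⁰} = Σ_j w̄_ij v_j^{t⁰}. (Paper's Corollary 1.)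 -/
open Finset RealInnerProductSpace
set_option maxHeartbeats 1000000

private lemma le_of_sq_le_sq'' {a b : ℝ} (ha : 0 ≤ a) (hb : 0 ≤ b) (h : a ^ 2 ≤ b ^ 2) :
    a ≤ b := by nlinarith

private lemma le_of_forall_eps {a b c : ℝ} (hc : 0 ≤ c)
    (h : ∀ ε : ℝ, 0 < ε → a ≤ b + ε * c) : a ≤ b := by
  by_contra hab
  push_neg at hab
  have hD : (0:ℝ) < 2 * (c + 1) := by linarith
  have hε : (0:ℝ) < (a - b) / (2 * (c + 1)) := div_pos (by linarith) hD
  have h2 := h _ hε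
  have h4 : (a - b) * (2 * (c + 1)) ≤ (a - b) * c := by
    calc (a - b) * (2 * (c + 1)) ≤ ((a - b) / (2 * (c + 1)) * c) * (2 * (c + 1)) := by
          apply mul_le_mul_of_nonneg_right (by linarith) hD.le
      _ = (a - b) * c := by field_simp
  nlinarith [h4, hab, hc]

private lemma arith1 {μ L α lam : ℝ} (hμ : 0 < μ) (hL : 0 < L) (hα0 : 0 < α)
    (hα2 : α * (2 * L) ≤ 1) (hlam' : lam * (μ + L) = μ * L) : 0 < 1 - 2 * α * lam := by
  nlinarith [hα2, hlam', hμ, hL, hα0]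

private lemma arith2 {ν t : ℝ} (h2 : ν ^ 2 = 1 - t) (h0 : 0 ≤ ν) (ht : 0 < t) : ν < 1 := by
  nlinarith [h2, h0, ht]

private lemma arith3 {a b : ℝ} (h : a ^ 2 = b) (hb : 1 ≤ b) (ha : 0 ≤ a) : 0 < a := by
  nlinarith [h, hb, ha]

private lemma arith4 {Zn K n : ℝ} (h : n ≤ Zn * n + K * n) (hn : 0 < n) : 1 ≤ Zn + K := by
  nlinarith [h, hn]

private lemma arith5 {Zn K : ℝ} (h1 : 1 ≤ Zn + K) (h2 : Zn ≤ 1) (hZ : 0 ≤ Zn) (hK : 0 ≤ K) :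
    0 < Zn + K - K * Zn := by
  rcases le_or_gt K 1 with hK1 | hK1
  · nlinarith [h1, hK1, hZ, hK,
      mul_nonneg (by linarith : (0:ℝ) ≤ Zn + K - 1) (by linarith : (0:ℝ) ≤ 1 - K),
      sq_nonneg (1 - 2 * K)]
  · nlinarith [h2, hK1, hZ, hK,
      mul_nonneg (by linarith : (0:ℝ) ≤ 1 - Zn) (by linarith : (0:ℝ) ≤ K - 1)]

section Aux
variable {H : Type*} [NormedAddCommGroup H] [InnerProductSpace ℝ H]

private lemma coco_one_sided (F : H → ℝ) (G : H → H) (L' : ℝ) (hL' : 0 < L')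
    (hl : ∀ x y, F y + ⟪x - y, G y⟫ ≤ F x)
    (hu : ∀ x y, F x ≤ F y + ⟪x - y, G y⟫ + L' / 2 * ‖x - y‖ ^ 2) :
    ∀ x y, 1 / (2 * L') * ‖G y - G x‖ ^ 2 ≤ F y - F x - ⟪y - x, G x⟫ := by
  intro x y
  set w := G y - G x with hw
  set z := y - (1 / L') • w with hz
  have h1 := hl z x
  have h2 := hu z y
  have e1 : z - x = (y - x) - (1 / L') • w := by rw [hz]; abel
  have e2 : z - y = -((1 / L') • w) := by rw [hz]; abel
  have i1 : ⟪z - x, G x⟫ = ⟪y - x, G x⟫ - (1 / L') * ⟪w, G x⟫ := by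
    rw [e1, inner_sub_left, real_inner_smul_left]
  have i2 : ⟪z - y, G y⟫ = -((1 / L') * ⟪w, G y⟫) := by
    rw [e2, inner_neg_left, real_inner_smul_left]
  have i3 : ‖z - y‖ ^ 2 = (1 / L') ^ 2 * ‖w‖ ^ 2 := by
    rw [e2, norm_neg, norm_smul, mul_pow, Real.norm_eq_abs, sq_abs]
  have i4 : ⟪w, G y⟫ - ⟪w, G x⟫ = ‖w‖ ^ 2 := by
    rw [← inner_sub_right, ← hw, real_inner_self_eq_norm_sq]
  have i5 : (1 / L') * ⟪w, G y⟫ - (1 / L') * ⟪w, G x⟫ = (1 / L') * ‖w‖ ^ 2 := by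
    rw [← mul_sub, i4]
  have hcomb : F x + (⟪y - x, G x⟫ - (1 / L') * ⟪w, G x⟫)
      ≤ F y + (-((1 / L') * ⟪w, G y⟫)) + L' / 2 * ((1 / L') ^ 2 * ‖w‖ ^ 2) := by
    rw [← i1, ← i2, ← i3]; exact le_trans h1 h2
  have expand : L' / 2 * ((1 / L') ^ 2 * ‖w‖ ^ 2) = 1 / (2 * L') * ‖w‖ ^ 2 := by
    field_simp
  rw [expand] at hcomb
  have expand2 : (1 / L') * ‖w‖ ^ 2 - 1 / (2 * L') * ‖w‖ ^ 2 = 1 / (2 * L') * ‖w‖ ^ 2 := by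
    field_simp; ring
  linarith [hcomb, i5, expand2]

private lemma coco (F : H → ℝ) (G : H → H) (L' : ℝ) (hL' : 0 < L')
    (hl : ∀ x y, F y + ⟪x - y, G y⟫ ≤ F x)
    (hu : ∀ x y, F x ≤ F y + ⟪x - y, G y⟫ + L' / 2 * ‖x - y‖ ^ 2) :
    ∀ x y, 1 / L' * ‖G x - G y‖ ^ 2 ≤ ⟪G x - G y, x - y⟫ := by
  intro x y
  have h1 := coco_one_sided F G L' hL' hl hu x y
  have h2 := coco_one_sided F G L' hL' hl hu y x
  have e0 : ‖G y - G x‖ = ‖G x - G y‖ := norm_sub_rev _ _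
  rw [e0] at h1
  have e1 : ⟪G x - G y, x - y⟫ = ⟪x - y, G x⟫ - ⟪x - y, G y⟫ := by
    rw [real_inner_comm, inner_sub_right]
  have e2 : ⟪y - x, G x⟫ = -⟪x - y, G x⟫ := by
    rw [← inner_neg_left, neg_sub]
  have e3 : 1 / (2 * L') * ‖G x - G y‖ ^ 2 + 1 / (2 * L') * ‖G x - G y‖ ^ 2
      = 1 / L' * ‖G x - G y‖ ^ 2 := by field_simp; ring
  linarith [h1, h2, e1, e2, e3]

end Aux

section Aux2
variable {H : Type*} [NormedAddCommGroup H] [InnerProductSpace ℝ H]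

private lemma mono_of_sc (f0 : H → ℝ) (G : H → H) (μ : ℝ)
    (hsc : ∀ x y, f0 x ≥ f0 y + ⟪x - y, G y⟫ + μ / 2 * ‖x - y‖ ^ 2) :
    ∀ x y, μ * ‖x - y‖ ^ 2 ≤ ⟪G x - G y, x - y⟫ := by
  intro x y
  have h1 := hsc x y
  have h2 := hsc y x
  have e0 : ‖y - x‖ = ‖x - y‖ := norm_sub_rev _ _
  rw [e0] at h2
  have e1 : ⟪G x - G y, x - y⟫ = ⟪x - y, G x⟫ - ⟪x - y, G y⟫ := by
    rw [real_inner_comm, inner_sub_right]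
  have e2 : ⟪y - x, G x⟫ = -⟪x - y, G x⟫ := by rw [← inner_neg_left, neg_sub]
  linarith [h1, h2, e1, e2]

private lemma shift_lower (f0 : H → ℝ) (G : H → H) (μ : ℝ)
    (hsc : ∀ x y, f0 x ≥ f0 y + ⟪x - y, G y⟫ + μ / 2 * ‖x - y‖ ^ 2) :
    ∀ a b, (fun z => f0 z - μ / 2 * ‖z‖ ^ 2) b + ⟪a - b, G b - μ • b⟫
      ≤ (fun z => f0 z - μ / 2 * ‖z‖ ^ 2) a := by
  intro a b
  have h := hsc a b
  have e1 : ⟪a - b, G b - μ • b⟫ = ⟪a - b, G b⟫ - μ * ⟪a - b, b⟫ := by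
    rw [inner_sub_right, real_inner_smul_right]
  have e2 : ‖a - b‖ ^ 2 = ‖a‖ ^ 2 - 2 * ⟪a, b⟫ + ‖b‖ ^ 2 := norm_sub_sq_real a b
  have e3 : ⟪a - b, b⟫ = ⟪a, b⟫ - ‖b‖ ^ 2 := by
    rw [inner_sub_left, real_inner_self_eq_norm_sq]
  have e2' : μ / 2 * ‖a - b‖ ^ 2 = μ / 2 * ‖a‖ ^ 2 - μ * ⟪a, b⟫ + μ / 2 * ‖b‖ ^ 2 := by
    linear_combination (μ / 2) * e2
  have e3' : μ * ⟪a - b, b⟫ = μ * ⟪a, b⟫ - μ * ‖b‖ ^ 2 := by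
    linear_combination μ * e3
  simp only
  linarith [h, e1, e2', e3']

private lemma shift_upper (f0 : H → ℝ) (G : H → H) (μ L ε : ℝ) (hε : 0 < ε) (hμL : μ ≤ L)
    (hsm : ∀ x y, f0 x ≤ f0 y + ⟪x - y, G y⟫ + L / 2 * ‖x - y‖ ^ 2) :
    ∀ a b, (fun z => f0 z - μ / 2 * ‖z‖ ^ 2) a
      ≤ (fun z => f0 z - μ / 2 * ‖z‖ ^ 2) b + ⟪a - b, G b - μ • b⟫
        + (L - μ + ε) / 2 * ‖a - b‖ ^ 2 := by
  intro a b
  have h := hsm a b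
  have e1 : ⟪a - b, G b - μ • b⟫ = ⟪a - b, G b⟫ - μ * ⟪a - b, b⟫ := by
    rw [inner_sub_right, real_inner_smul_right]
  have e2 : ‖a - b‖ ^ 2 = ‖a‖ ^ 2 - 2 * ⟪a, b⟫ + ‖b‖ ^ 2 := norm_sub_sq_real a b
  have e3 : ⟪a - b, b⟫ = ⟪a, b⟫ - ‖b‖ ^ 2 := by
    rw [inner_sub_left, real_inner_self_eq_norm_sq]
  have e2' : μ / 2 * ‖a - b‖ ^ 2 = μ / 2 * ‖a‖ ^ 2 - μ * ⟪a, b⟫ + μ / 2 * ‖b‖ ^ 2 := by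
    linear_combination (μ / 2) * e2
  have e3' : μ * ⟪a - b, b⟫ = μ * ⟪a, b⟫ - μ * ‖b‖ ^ 2 := by
    linear_combination μ * e3
  have hsq : 0 ≤ ε / 2 * ‖a - b‖ ^ 2 := by positivity
  simp only
  linarith [h, e1, e2', e3', hsq]
end Aux2

section Aux3
variable {H : Type*} [NormedAddCommGroup H] [InnerProductSpace ℝ H]

private lemma coercive (f0 : H → ℝ) (G : H → H) (μ L : ℝ) (hμ : 0 < μ) (hμL : μ ≤ L)
    (hsc : ∀ x y, f0 x ≥ f0 y + ⟪x - y, G y⟫ + μ / 2 * ‖x - y‖ ^ 2)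
    (hsm : ∀ x y, f0 x ≤ f0 y + ⟪x - y, G y⟫ + L / 2 * ‖x - y‖ ^ 2) :
    ∀ x y, ‖G x - G y‖ ^ 2 + μ * L * ‖x - y‖ ^ 2 ≤ (L + μ) * ⟪G x - G y, x - y⟫ := by
  intro x y
  set P := ⟪G x - G y, x - y⟫ with hP
  set Q := ‖G x - G y‖ ^ 2 with hQ
  set S := ‖x - y‖ ^ 2 with hS
  have hmono : μ * S ≤ P := mono_of_sc f0 G μ hsc x y
  have hcnn : 0 ≤ P - μ * S := by linarith
  apply le_of_forall_eps hcnn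
  intro ε hε
  have hL' : 0 < L - μ + ε := by linarith
  have hco := coco (fun z => f0 z - μ / 2 * ‖z‖ ^ 2) (fun z => G z - μ • z) (L - μ + ε) hL'
    (shift_lower f0 G μ hsc) (shift_upper f0 G μ L ε hε hμL hsm) x y
  have eg : (G x - μ • x) - (G y - μ • y) = (G x - G y) - μ • (x - y) := by
    rw [smul_sub]; abel
  rw [eg] at hco
  have en : ‖(G x - G y) - μ • (x - y)‖ ^ 2 = Q - 2 * μ * P + μ ^ 2 * S := by
    rw [norm_sub_sq_real, real_inner_smul_right, norm_smul, mul_pow, Real.norm_eq_abs, sq_abs,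
      ← hQ, ← hS]
    have : ⟪G x - G y, x - y⟫ = P := rfl
    rw [this]; ring
  have ei : ⟪(G x - G y) - μ • (x - y), x - y⟫ = P - μ * S := by
    rw [inner_sub_left, real_inner_smul_left, real_inner_self_eq_norm_sq, ← hS, ← hP]
  rw [en, ei] at hco
  -- hco : 1/(L-μ+ε) * (Q - 2μP + μ²S) ≤ P - μS
  have hco' : Q - 2 * μ * P + μ ^ 2 * S ≤ (L - μ + ε) * (P - μ * S) := by
    have h2 := mul_le_mul_of_nonneg_left hco hL'.le
    have e4 : (L - μ + ε) * (1 / (L - μ + ε) * (Q - 2 * μ * P + μ ^ 2 * S))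
        = Q - 2 * μ * P + μ ^ 2 * S := by
      field_simp
    linarith [h2, e4]
  nlinarith [hco']

private lemma contraction_pt (f0 : H → ℝ) (G : H → H) (μ L α lam ν : ℝ)
    (hμ : 0 < μ) (hμL : μ ≤ L) (hα0 : 0 < α) (hα : α ≤ 1 / (2 * L))
    (hlam : lam = μ * L / (μ + L)) (hν : ν = Real.sqrt (1 - 2 * α * lam))
    (hsc : ∀ x y, f0 x ≥ f0 y + ⟪x - y, G y⟫ + μ / 2 * ‖x - y‖ ^ 2)
    (hsm : ∀ x y, f0 x ≤ f0 y + ⟪x - y, G y⟫ + L / 2 * ‖x - y‖ ^ 2) :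
    ∀ x y, ‖(x - α • G x) - (y - α • G y)‖ ≤ ν * ‖x - y‖ := by
  have hL : 0 < L := lt_of_lt_of_le hμ hμL
  have hml : 0 < μ + L := by linarith
  have hlam' : lam * (μ + L) = μ * L := by rw [hlam]; field_simp
  have hα2 : α * (2 * L) ≤ 1 := by
    rw [le_div_iff₀ (by positivity)] at hα; linarith only [hα]
  have harga : 0 < 1 - 2 * α * lam := arith1 hμ hL hα0 hα2 hlam'
  have hν0 : 0 ≤ ν := hν ▸ Real.sqrt_nonneg _
  have hν2 : ν ^ 2 = 1 - 2 * α * lam := by rw [hν, Real.sq_sqrt harga.le]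
  intro x y
  set P := ⟪G x - G y, x - y⟫ with hP
  set Q := ‖G x - G y‖ ^ 2 with hQ
  set S := ‖x - y‖ ^ 2 with hS
  have hQ0 : 0 ≤ Q := by rw [hQ]; positivity
  have hS0 : 0 ≤ S := by rw [hS]; positivity
  have hcoer : Q + μ * L * S ≤ (L + μ) * P := coercive f0 G μ L hμ hμL hsc hsm x y
  have e : (x - α • G x) - (y - α • G y) = (x - y) - α • (G x - G y) := by
    rw [smul_sub]; abel
  have en : ‖(x - y) - α • (G x - G y)‖ ^ 2 = S - 2 * α * P + α ^ 2 * Q := by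
    rw [norm_sub_sq_real, real_inner_smul_right, norm_smul, mul_pow, Real.norm_eq_abs, sq_abs,
      ← hQ, ← hS]
    have : ⟪x - y, G x - G y⟫ = P := by rw [hP, real_inner_comm]
    rw [this]; ring
  apply le_of_sq_le_sq'' (norm_nonneg _) (by positivity)
  rw [e, en, mul_pow, hν2, ← hS]
  -- goal : S - 2αP + α²Q ≤ (1 - 2αlam) * S
  have hc3 : α * (μ + L) * (α * Q) ≤ 1 * (α * Q) := by
    apply mul_le_mul_of_nonneg_right _ (mul_nonneg hα0.le hQ0)
    nlinarith [hα2, hμ, hα0]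
  have hc1 : 2 * α * (Q + μ * L * S) ≤ 2 * α * ((L + μ) * P) := by
    apply mul_le_mul_of_nonneg_left hcoer (by positivity)
  have hlam2 : 2 * α * lam * S * (μ + L) = 2 * α * (μ * L) * S := by
    linear_combination (2 * α * S) * hlam'
  nlinarith [hc1, hc3, hlam2, hml, mul_nonneg hα0.le hQ0, hS0]

private lemma grad_min_zero (f0 : H → ℝ) (G : H → H) (L : ℝ) (hL : 0 < L)
    (hsm : ∀ x y, f0 x ≤ f0 y + ⟪x - y, G y⟫ + L / 2 * ‖x - y‖ ^ 2)
    (m : H) (hmin : ∀ y, f0 m ≤ f0 y) : G m = 0 := by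
  have h := hsm (m - (1 / L) • G m) m
  have e0 : m - (1 / L) • G m - m = -((1 / L) • G m) := by abel
  rw [e0] at h
  have e1 : ⟪-((1 / L) • G m), G m⟫ = -((1 / L) * ‖G m‖ ^ 2) := by
    rw [inner_neg_left, real_inner_smul_left, real_inner_self_eq_norm_sq]
  have e2 : ‖-((1 / L) • G m)‖ ^ 2 = (1 / L) ^ 2 * ‖G m‖ ^ 2 := by
    rw [norm_neg, norm_smul, mul_pow, Real.norm_eq_abs, sq_abs]
  rw [e1, e2] at h
  have h2 := hmin (m - (1 / L) • G m)
  have e3 : L / 2 * ((1 / L) ^ 2 * ‖G m‖ ^ 2) = 1 / (2 * L) * ‖G m‖ ^ 2 := by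
    field_simp
  rw [e3] at h
  have e4 : f0 m + -(1 / L * ‖G m‖ ^ 2) + 1 / (2 * L) * ‖G m‖ ^ 2
      = f0 m - 1 / (2 * L) * ‖G m‖ ^ 2 := by
    field_simp; ring
  rw [e4] at h
  have hsq : ‖G m‖ ^ 2 ≤ 0 := by
    have hpos : 0 < 1 / (2 * L) := by positivity
    nlinarith [h, h2, hpos]
  have : ‖G m‖ = 0 := by nlinarith [norm_nonneg (G m), hsq]
  exact norm_eq_zero.mp this

end Aux3

section PiAux
variable {ι : Type*} [Fintype ι] {B : ι → Type*} [∀ i, SeminormedAddCommGroup (B i)]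

private lemma pi_norm_le_of_forall {c : ℝ} (hc : 0 ≤ c) (u w : PiLp 2 B)
    (h : ∀ i, ‖u i‖ ≤ c * ‖w i‖) : ‖u‖ ≤ c * ‖w‖ := by
  apply le_of_sq_le_sq'' (norm_nonneg _) (by positivity)
  rw [mul_pow, PiLp.norm_sq_eq_of_L2, PiLp.norm_sq_eq_of_L2, Finset.mul_sum]
  apply Finset.sum_le_sum
  intro i _
  calc ‖u i‖ ^ 2 ≤ (c * ‖w i‖) ^ 2 := by
        apply pow_le_pow_left₀ (norm_nonneg _) (h i)
    _ = c ^ 2 * ‖w i‖ ^ 2 := by ring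

private lemma pi_apply_norm_le (u : PiLp 2 B) (i : ι) : ‖u i‖ ≤ ‖u‖ := by
  apply le_of_sq_le_sq'' (norm_nonneg _) (norm_nonneg _)
  rw [PiLp.norm_sq_eq_of_L2]
  exact Finset.single_le_sum (f := fun j => ‖u j‖ ^ 2) (fun j _ => sq_nonneg _)
    (Finset.mem_univ i)

end PiAux

/-- Paper's Corollary 1 (uniformly bounded bias correction for exact MUSIC). -/
theorem exact_music_uniform_bias_correction_bound
    {N p : ℕ}
    (f : Fin N → EuclideanSpace ℝ (Fin p) → ℝ)
    (g : Fin N → EuclideanSpace ℝ (Fin p) → EuclideanSpace ℝ (Fin p))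
    (μ L : ℝ) (hμ : 0 < μ) (hμL : μ ≤ L)
    (hsc : ∀ i x y, f i x ≥ f i y + ⟪x - y, g i y⟫ + μ / 2 * ‖x - y‖ ^ 2)
    (hsm : ∀ i x y, f i x ≤ f i y + ⟪x - y, g i y⟫ + L / 2 * ‖x - y‖ ^ 2)
    (vstar : PiLp 2 fun _ : Fin N => EuclideanSpace ℝ (Fin p))
    (hvstar : ∀ i y, f i (vstar i) ≤ f i y)
    (W : Fin N → Fin N → ℝ)
    (hWsymm : ∀ i j, W i j = W j i)
    (hWnonneg : ∀ i j, 0 ≤ W i j)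
    (hWrow : ∀ i, ∑ j, W i j = 1)
    (Wbar : Fin N → Fin N → ℝ)
    (hWbar : ∀ i j, Wbar i j = (W i j + if i = j then 1 else 0) / 2)
    (Z : (PiLp 2 fun _ : Fin N => EuclideanSpace ℝ (Fin p)) →L[ℝ]
         (PiLp 2 fun _ : Fin N => EuclideanSpace ℝ (Fin p)))
    (hZ : ∀ u, ∀ i : Fin N, Z u i = ∑ j, Wbar i j • u j)
    (α β : ℝ) (hα0 : 0 < α) (hα : α ≤ 1 / (2 * L))
    (hβ0 : 0 ≤ β) (hβ1 : β ≤ 1)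
    (E : ℕ) (hE : 1 ≤ E)
    (x v : ℕ → PiLp 2 fun _ : Fin N => EuclideanSpace ℝ (Fin p))
    (hinit : x 0 = v 0)
    (hv : ∀ t, ∀ i : Fin N, v (t + 1) i = x t i - α • g i (x t i))
    (hx1 : ∀ t, ¬ E ∣ (t + 1) →
      x (t + 1) = v (t + 1) + β • (x (E * (t / E)) - v (E * (t / E))))
    (hx2 : ∀ t, E ∣ (t + 1) →
      x (t + 1) = Z (v (t + 1) + β • (x (E * (t / E)) - v (E * (t / E)))))
    (lam ν : ℝ)
    (hlam : lam = μ * L / (μ + L))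
    (hν : ν = Real.sqrt (1 - 2 * α * lam))
    (hEβ : ν ^ E * (1 - β * ν / (1 - ν) * ‖Z - 1‖) ≤
        1 - β * ν / (1 - ν) * ‖Z - 1‖ - β * ‖Z‖) :
    ∃ Θ : ℝ, 0 ≤ Θ ∧ ∀ k : ℕ, ∀ i : Fin N,
      ‖(∑ j, Wbar i j • x (k * E) j) - ∑ j, Wbar i j • v (k * E) j‖ ≤ Θ := by
  -- trivial cases
  rcases Nat.eq_zero_or_pos N with hN | hN
  · subst hN; exact ⟨0, le_rfl, fun k i => i.elim0⟩
  rcases Nat.eq_zero_or_pos p with hp | hp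
  · subst hp
    refine ⟨0, le_rfl, fun k i => ?_⟩
    haveI : Subsingleton (EuclideanSpace ℝ (Fin 0)) :=
      ⟨fun a b => PiLp.ext fun j => j.elim0⟩
    rw [Subsingleton.elim ((∑ j, Wbar i j • x (k * E) j) - ∑ j, Wbar i j • v (k * E) j)
      (0 : EuclideanSpace ℝ (Fin 0)), norm_zero]
  -- basic scalar facts
  have hL : 0 < L := lt_of_lt_of_le hμ hμL
  have hml : 0 < μ + L := by linarith
  have hlam' : lam * (μ + L) = μ * L := by rw [hlam]; field_simp
  have hlam0 : 0 < lam := by rw [hlam]; exact div_pos (mul_pos hμ hL) hml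
  have hα2 : α * (2 * L) ≤ 1 := by
    rw [le_div_iff₀ (by positivity)] at hα; linarith only [hα]
  have harga : 0 < 1 - 2 * α * lam := arith1 hμ hL hα0 hα2 hlam'
  have hν0 : 0 < ν := by rw [hν]; exact Real.sqrt_pos.mpr harga
  have hν2 : ν ^ 2 = 1 - 2 * α * lam := by rw [hν, Real.sq_sqrt harga.le]
  have hν1 : ν < 1 := arith2 hν2 hν0.le (by positivity)
  have h1ν : 0 < 1 - ν := by linarith only [hν1]
  -- per-agent contraction and stationary point
  have hcontr : ∀ (i : Fin N) (a b : EuclideanSpace ℝ (Fin p)),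
      ‖(a - α • g i a) - (b - α • g i b)‖ ≤ ν * ‖a - b‖ := fun i =>
    contraction_pt (f i) (g i) μ L α lam ν hμ hμL hα0 hα hlam hν (hsc i) (hsm i)
  have hg0 : ∀ i, g i (vstar i) = 0 := fun i =>
    grad_min_zero (f i) (g i) L hL (hsm i) (vstar i) (hvstar i)
  have hcontr' : ∀ (i : Fin N) (a : EuclideanSpace ℝ (Fin p)),
      ‖(a - α • g i a) - vstar i‖ ≤ ν * ‖a - vstar i‖ := by
    intro i a
    have h := hcontr i a (vstar i)
    rwa [hg0 i, smul_zero, sub_zero] at h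
  have hvc : ∀ t, ‖v (t + 1) - vstar‖ ≤ ν * ‖x t - vstar‖ := by
    intro t
    apply pi_norm_le_of_forall hν0.le
    intro i
    rw [PiLp.sub_apply, PiLp.sub_apply, hv t i]
    exact hcontr' i (x t i)
  -- weight matrix facts
  have hWbnn : ∀ i j, 0 ≤ Wbar i j := by
    intro i j
    rw [hWbar]
    have : (0:ℝ) ≤ (if i = j then (1:ℝ) else 0) := by split <;> norm_num
    have := hWnonneg i j
    positivity
  have hWbrow : ∀ i, ∑ j, Wbar i j = 1 := by
    intro i
    simp only [hWbar]
    rw [← Finset.sum_div, Finset.sum_add_distrib, hWrow i, Finset.sum_ite_eq]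
    simp
  have hWbsym : ∀ i j, Wbar i j = Wbar j i := by
    intro i j
    rw [hWbar, hWbar, hWsymm i j]
    have : (if i = j then (1:ℝ) else 0) = (if j = i then 1 else 0) := by simp [eq_comm]
    rw [this]
  have hWbcol : ∀ j, ∑ i, Wbar i j = 1 := by
    intro j
    calc ∑ i, Wbar i j = ∑ i, Wbar j i := Finset.sum_congr rfl fun i _ => hWbsym i j
      _ = 1 := hWbrow j
  -- Jensen: ‖Z u‖ ≤ ‖u‖
  have hZle : ∀ u, ‖Z u‖ ≤ ‖u‖ := by
    intro u
    apply le_of_sq_le_sq'' (norm_nonneg _) (norm_nonneg _)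
    rw [PiLp.norm_sq_eq_of_L2, PiLp.norm_sq_eq_of_L2]
    have hcomp : ∀ i, ‖Z u i‖ ^ 2 ≤ ∑ j, Wbar i j * ‖u j‖ ^ 2 := by
      intro i
      have h1 : ‖Z u i‖ ≤ ∑ j, Wbar i j * ‖u j‖ := by
        rw [hZ u i]
        refine (norm_sum_le _ _).trans (Finset.sum_le_sum fun j _ => ?_)
        rw [norm_smul, Real.norm_eq_abs, abs_of_nonneg (hWbnn i j)]
      have h2 := Finset.sum_mul_sq_le_sq_mul_sq Finset.univ
        (fun j => Real.sqrt (Wbar i j)) (fun j => Real.sqrt (Wbar i j) * ‖u j‖)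
      have e1 : ∀ j ∈ Finset.univ (α := Fin N),
          Real.sqrt (Wbar i j) * (Real.sqrt (Wbar i j) * ‖u j‖) = Wbar i j * ‖u j‖ :=
        fun j _ => by rw [← mul_assoc, Real.mul_self_sqrt (hWbnn i j)]
      have e2 : ∀ j ∈ Finset.univ (α := Fin N), Real.sqrt (Wbar i j) ^ 2 = Wbar i j :=
        fun j _ => Real.sq_sqrt (hWbnn i j)
      have e3 : ∀ j ∈ Finset.univ (α := Fin N),
          (Real.sqrt (Wbar i j) * ‖u j‖) ^ 2 = Wbar i j * ‖u j‖ ^ 2 :=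
        fun j _ => by rw [mul_pow, Real.sq_sqrt (hWbnn i j)]
      rw [Finset.sum_congr rfl e1, Finset.sum_congr rfl e2, Finset.sum_congr rfl e3,
        hWbrow i, one_mul] at h2
      calc ‖Z u i‖ ^ 2 ≤ (∑ j, Wbar i j * ‖u j‖) ^ 2 :=
            pow_le_pow_left₀ (norm_nonneg _) h1 2
        _ ≤ ∑ j, Wbar i j * ‖u j‖ ^ 2 := h2
    calc ∑ i, ‖Z u i‖ ^ 2 ≤ ∑ i, ∑ j, Wbar i j * ‖u j‖ ^ 2 :=
          Finset.sum_le_sum fun i _ => hcomp i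
      _ = ∑ j, (∑ i, Wbar i j) * ‖u j‖ ^ 2 := by
          rw [Finset.sum_comm]
          exact Finset.sum_congr rfl fun j _ => (Finset.sum_mul _ _ _).symm
      _ = ∑ j, ‖u j‖ ^ 2 := Finset.sum_congr rfl fun j _ => by rw [hWbcol j, one_mul]
  -- operator norm constants
  set K := ‖Z - 1‖ with hKdef
  set Zn := ‖Z‖ with hZndef
  have hK0 : 0 ≤ K := norm_nonneg _
  have hZn0 : 0 ≤ Zn := norm_nonneg _
  have hZn1 : Zn ≤ 1 := by
    rw [hZndef]
    exact ContinuousLinearMap.opNorm_le_bound Z zero_le_one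
      (fun u => by rw [one_mul]; exact hZle u)
  have hZK1 : 1 ≤ Zn + K := by
    set u₀ : PiLp 2 (fun _ : Fin N => EuclideanSpace ℝ (Fin p)) :=
      (WithLp.equiv 2 _).symm (fun _ => EuclideanSpace.single (⟨0, hp⟩ : Fin p) (1:ℝ)) with hu₀
    have hn2 : ‖u₀‖ ^ 2 = (N : ℝ) := by
      rw [PiLp.norm_sq_eq_of_L2]
      have : ∀ i : Fin N, ‖u₀ i‖ ^ 2 = 1 := by
        intro i
        rw [hu₀, WithLp.equiv_symm_apply, PiLp.toLp_apply, EuclideanSpace.norm_single]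
        norm_num
      rw [Finset.sum_congr rfl fun i _ => this i]
      simp
    have hN1 : (1:ℝ) ≤ (N:ℝ) := by exact_mod_cast hN
    have hpos : 0 < ‖u₀‖ := arith3 hn2 hN1 (norm_nonneg u₀)
    have hZZ : Z u₀ - (Z - 1) u₀ = u₀ := by
      simp [ContinuousLinearMap.sub_apply]
    have h2 : ‖u₀‖ ≤ Zn * ‖u₀‖ + K * ‖u₀‖ := by
      calc ‖u₀‖ = ‖Z u₀ - (Z - 1) u₀‖ := by rw [hZZ]
        _ ≤ ‖Z u₀‖ + ‖(Z - 1) u₀‖ := norm_sub_le _ _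
        _ ≤ Zn * ‖u₀‖ + K * ‖u₀‖ := by
            rw [hZndef, hKdef]
            exact add_le_add (Z.le_opNorm u₀) ((Z - 1).le_opNorm u₀)
    exact arith4 h2 hpos
  have hKap : ∀ w : PiLp 2 (fun _ : Fin N => EuclideanSpace ℝ (Fin p)),
      ‖Z w - w‖ ≤ K * ‖w‖ := by
    intro w
    have h : Z w - w = (Z - 1) w := by simp [ContinuousLinearMap.sub_apply]
    rw [h, hKdef]
    exact (Z - 1).le_opNorm w
  -- geometric quantities
  set σ'' := ν * ∑ j ∈ Finset.range (E - 1), ν ^ j with hσdef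
  have hσnn : 0 ≤ σ'' := by
    rw [hσdef]
    exact mul_nonneg hν0.le (Finset.sum_nonneg fun j _ => pow_nonneg hν0.le j)
  have hpowE : ν * ν ^ (E - 1) = ν ^ E := by
    rw [← pow_succ']
    congr 1
    omega
  have hσid : (1 - ν) * σ'' = ν - ν ^ E := by
    have h := geom_sum_mul ν (E - 1)
    rw [hσdef, ← hpowE]
    linear_combination (-ν) * h
  have hνE1 : ν ^ E < 1 := pow_lt_one₀ hν0.le hν1 (by omega)
  have hΔ : 0 < 1 - ν ^ E := by linarith only [hνE1]
  have hνEnn : 0 ≤ ν ^ E := pow_nonneg hν0.le E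
  -- condition in polynomial form
  set cc := β * ν / (1 - ν) * K with hccdef
  have hccK : cc * (1 - ν) = β * ν * K := by rw [hccdef]; field_simp
  have hG : β * Zn ≤ (1 - ν ^ E) - cc * (1 - ν ^ E) := by linarith only [hEβ]
  have hid : (1 - ν ^ E) * cc - β * K * σ'' = β * K * ν ^ E := by
    have key : ((1 - ν ^ E) * cc - β * K * σ'' - β * K * ν ^ E) * (1 - ν) = 0 := by
      linear_combination (1 - ν ^ E) * hccK - β * K * hσid
    rcases mul_eq_zero.mp key with h | h
    · linarith only [h]
    · exfalso; linarith only [h, h1ν]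
  -- determinant
  set det := (1 - ν ^ E) * (1 - K * β * σ'' - β * Zn) - β * K * ν ^ E * (σ'' + Zn) with hdetdef
  have hdet : 0 < det := by
    rcases eq_or_lt_of_le hβ0 with hb | hb
    · have hdet0 : det = 1 - ν ^ E := by rw [hdetdef, ← hb]; ring
      linarith only [hΔ, hdet0]
    · have hZsum : 0 < Zn + K - K * Zn := by
        rcases le_or_gt K 1 with hK1 | hK1
        · nlinarith [hZK1, hK1, hZn0, hK0,
            mul_nonneg (by linarith : (0:ℝ) ≤ Zn + K - 1) (by linarith : (0:ℝ) ≤ 1 - K),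
            sq_nonneg (1 - 2 * K)]
        · nlinarith [hZn1, hK1, hZn0, hK0,
            mul_nonneg (by linarith : (0:ℝ) ≤ 1 - Zn) (by linarith : (0:ℝ) ≤ K - 1)]
      have hfin : β * ν ^ E * (Zn + K - K * Zn) ≤ det := by
        rw [hdetdef]; linarith only [hG, hid]
      have hpos2 : 0 < β * ν ^ E * (Zn + K - K * Zn) :=
        mul_pos (mul_pos hb (pow_pos hν0 E)) hZsum
      linarith only [hfin, hpos2]
  -- fixed-point constants
  set FA := K * ‖vstar‖ + (1 - ν ^ E) * ‖x 0 - vstar‖ with hFAdef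
  have hFAnn : 0 ≤ FA := by
    rw [hFAdef]
    exact add_nonneg (mul_nonneg hK0 (norm_nonneg _)) (mul_nonneg hΔ.le (norm_nonneg _))
  set rr := (K * ν ^ E * FA + (1 - ν ^ E) * (K * ‖vstar‖)) / det with hrrdef
  have hrr0 : 0 ≤ rr := by
    rw [hrrdef]
    apply div_nonneg _ hdet.le
    exact add_nonneg (mul_nonneg (mul_nonneg hK0 hνEnn) hFAnn)
      (mul_nonneg hΔ.le (mul_nonneg hK0 (norm_nonneg _)))
  set RR := (β * (σ'' + Zn) * rr + FA) / (1 - ν ^ E) with hRRdef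
  have hRR0 : 0 ≤ RR := by
    rw [hRRdef]
    apply div_nonneg _ hΔ.le
    exact add_nonneg (mul_nonneg (mul_nonneg hβ0 (add_nonneg hσnn hZn0)) hrr0) hFAnn
  have hAeq : (1 - ν ^ E) * RR = β * (σ'' + Zn) * rr + FA := by
    rw [hRRdef]; field_simp
  have hBeq : det * rr = K * ν ^ E * FA + (1 - ν ^ E) * (K * ‖vstar‖) := by
    rw [hrrdef]; field_simp
  have hconsA : ν ^ E * RR + β * rr * σ'' + β * (Zn * rr) + K * ‖vstar‖ ≤ RR := by
    have h0 : 0 ≤ (1 - ν ^ E) * ‖x 0 - vstar‖ := mul_nonneg hΔ.le (norm_nonneg _)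
    linarith only [hAeq, hFAdef, h0]
  have hconsB : K * (ν ^ E * RR + β * rr * σ'') + K * ‖vstar‖ + β * (Zn * rr) ≤ rr := by
    have h1 : K * ν ^ E * ((1 - ν ^ E) * RR) = K * ν ^ E * (β * (σ'' + Zn) * rr + FA) := by
      rw [hAeq]
    have h2 : det * rr = ((1 - ν ^ E) * (1 - K * β * σ'' - β * Zn)
        - β * K * ν ^ E * (σ'' + Zn)) * rr := by rw [hdetdef]
    have h3 : (1 - ν ^ E) * (K * (ν ^ E * RR + β * rr * σ'') + K * ‖vstar‖ + β * (Zn * rr))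
        = (1 - ν ^ E) * rr := by linear_combination h1 - hBeq + h2
    exact le_of_mul_le_mul_left h3.le hΔ
  have hbase : ‖x 0 - vstar‖ ≤ RR := by
    have h0 : 0 ≤ β * (σ'' + Zn) * rr :=
      mul_nonneg (mul_nonneg hβ0 (add_nonneg hσnn hZn0)) hrr0
    have h1 : 0 ≤ K * ‖vstar‖ := mul_nonneg hK0 (norm_nonneg _)
    have h3 : (1 - ν ^ E) * ‖x 0 - vstar‖ ≤ (1 - ν ^ E) * RR := by
      linarith only [hAeq, hFAdef, h0, h1]
    exact le_of_mul_le_mul_left h3 hΔ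
  -- index bookkeeping
  have hdiv : ∀ k s : ℕ, s < E → (E * k + s) / E = k := by
    intro k s hs
    rw [Nat.mul_add_div (by omega : 0 < E), Nat.div_eq_of_lt hs, add_zero]
  -- intra-block bound
  have hblock : ∀ k s : ℕ, s + 1 ≤ E → ‖x (E * k + s) - vstar‖ ≤
      ν ^ s * ‖x (E * k) - vstar‖
        + β * ‖x (E * k) - v (E * k)‖ * (∑ j ∈ Finset.range s, ν ^ j) := by
    intro k s
    induction s with
    | zero => intro _; simp
    | succ s ih =>
      intro hsE
      have ih' := ih (by omega)
      have hndvd : ¬ E ∣ (E * k + s + 1) := by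
        intro hd
        have h1 : E ∣ E * k := Dvd.intro k rfl
        have h2 : E ∣ (s + 1) := by
          rw [add_assoc] at hd
          exact (Nat.dvd_add_right h1).mp hd
        have := Nat.le_of_dvd (by omega) h2
        omega
      have hxe := hx1 (E * k + s) hndvd
      rw [hdiv k s (by omega)] at hxe
      have he : E * k + (s + 1) = E * k + s + 1 := rfl
      rw [he]
      have hdec : x (E * k + s + 1) - vstar
          = (v (E * k + s + 1) - vstar) + β • (x (E * k) - v (E * k)) := by
        rw [hxe]; abel
      have h1 : ‖x (E * k + s + 1) - vstar‖
          ≤ ‖v (E * k + s + 1) - vstar‖ + β * ‖x (E * k) - v (E * k)‖ := by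
        rw [hdec]
        refine (norm_add_le _ _).trans ?_
        rw [norm_smul, Real.norm_eq_abs, abs_of_nonneg hβ0]
      have h2 := hvc (E * k + s)
      have h3 : ν * ‖x (E * k + s) - vstar‖ ≤ ν * (ν ^ s * ‖x (E * k) - vstar‖
          + β * ‖x (E * k) - v (E * k)‖ * (∑ j ∈ Finset.range s, ν ^ j)) :=
        mul_le_mul_of_nonneg_left ih' hν0.le
      have hgs : (∑ j ∈ Finset.range (s + 1), ν ^ j)
          = (ν * ∑ j ∈ Finset.range s, ν ^ j) + 1 := geom_sum_succ
      rw [pow_succ', hgs]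
      linarith only [h1, h2, h3]
  -- end-of-block gradient step
  have hvE : ∀ k, ‖v (E * k + E) - vstar‖ ≤
      ν ^ E * ‖x (E * k) - vstar‖ + β * ‖x (E * k) - v (E * k)‖ * σ'' := by
    intro k
    have hb := hblock k (E - 1) (by omega)
    have h2 := hvc (E * k + (E - 1))
    have he : E * k + (E - 1) + 1 = E * k + E := by rw [add_assoc]; congr 1; omega
    rw [he] at h2
    have h3 := mul_le_mul_of_nonneg_left hb hν0.le
    calc ‖v (E * k + E) - vstar‖ ≤ ν * ‖x (E * k + (E - 1)) - vstar‖ := h2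
      _ ≤ ν * (ν ^ (E - 1) * ‖x (E * k) - vstar‖
          + β * ‖x (E * k) - v (E * k)‖ * (∑ j ∈ Finset.range (E - 1), ν ^ j)) := h3
      _ = ν ^ E * ‖x (E * k) - vstar‖ + β * ‖x (E * k) - v (E * k)‖ * σ'' := by
          rw [hσdef]
          linear_combination ‖x (E * k) - vstar‖ * hpowE
  -- combination step
  have hcomb : ∀ k, x (E * k + E) = Z (v (E * k + E) + β • (x (E * k) - v (E * k))) := by
    intro k
    have he : E * k + (E - 1) + 1 = E * k + E := by rw [add_assoc]; congr 1; omega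
    have hd : E ∣ (E * k + (E - 1) + 1) := by
      rw [he]; exact ⟨k + 1, (Nat.mul_succ E k).symm⟩
    have hxe := hx2 (E * k + (E - 1)) hd
    rw [hdiv k (E - 1) (by omega), he] at hxe
    exact hxe
  -- one-block recursions
  have hstepA : ∀ k, ‖x (E * k + E) - vstar‖ ≤
      ν ^ E * ‖x (E * k) - vstar‖ + β * ‖x (E * k) - v (E * k)‖ * σ''
        + β * (Zn * ‖x (E * k) - v (E * k)‖) + K * ‖vstar‖ := by
    intro k
    have hdec : x (E * k + E) - vstar = Z (v (E * k + E) - vstar)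
        + β • Z (x (E * k) - v (E * k)) + (Z vstar - vstar) := by
      rw [hcomb k]
      simp only [map_add, map_smul, map_sub]
      abel
    rw [hdec]
    have t1 : ‖Z (v (E * k + E) - vstar)‖ ≤ ν ^ E * ‖x (E * k) - vstar‖
        + β * ‖x (E * k) - v (E * k)‖ * σ'' := (hZle _).trans (hvE k)
    have t2 : ‖Z (x (E * k) - v (E * k))‖ ≤ Zn * ‖x (E * k) - v (E * k)‖ := by
      rw [hZndef]; exact Z.le_opNorm _
    have t2' : β * ‖Z (x (E * k) - v (E * k))‖ ≤ β * (Zn * ‖x (E * k) - v (E * k)‖) :=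
      mul_le_mul_of_nonneg_left t2 hβ0
    have t3 : ‖Z vstar - vstar‖ ≤ K * ‖vstar‖ := hKap vstar
    refine (norm_add₃_le).trans ?_
    rw [norm_smul, Real.norm_eq_abs, abs_of_nonneg hβ0]
    linarith only [t1, t2', t3]
  have hstepB : ∀ k, ‖x (E * k + E) - v (E * k + E)‖ ≤
      K * (ν ^ E * ‖x (E * k) - vstar‖ + β * ‖x (E * k) - v (E * k)‖ * σ'')
        + K * ‖vstar‖ + β * (Zn * ‖x (E * k) - v (E * k)‖) := by
    intro k
    have hdec : x (E * k + E) - v (E * k + E)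
        = (Z (v (E * k + E) - vstar) - (v (E * k + E) - vstar)) + (Z vstar - vstar)
          + β • Z (x (E * k) - v (E * k)) := by
      rw [hcomb k]
      simp only [map_add, map_smul, map_sub]
      abel
    rw [hdec]
    have t1 : ‖Z (v (E * k + E) - vstar) - (v (E * k + E) - vstar)‖
        ≤ K * ‖v (E * k + E) - vstar‖ := hKap _
    have t1' : K * ‖v (E * k + E) - vstar‖
        ≤ K * (ν ^ E * ‖x (E * k) - vstar‖ + β * ‖x (E * k) - v (E * k)‖ * σ'') :=
      mul_le_mul_of_nonneg_left (hvE k) hK0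
    have t2 : ‖Z (x (E * k) - v (E * k))‖ ≤ Zn * ‖x (E * k) - v (E * k)‖ := by
      rw [hZndef]; exact Z.le_opNorm _
    have t2' : β * ‖Z (x (E * k) - v (E * k))‖ ≤ β * (Zn * ‖x (E * k) - v (E * k)‖) :=
      mul_le_mul_of_nonneg_left t2 hβ0
    have t3 : ‖Z vstar - vstar‖ ≤ K * ‖vstar‖ := hKap vstar
    refine (norm_add₃_le).trans ?_
    rw [norm_smul, Real.norm_eq_abs, abs_of_nonneg hβ0]
    linarith only [t1, t1', t2', t3]
  -- main induction
  have main : ∀ k, ‖x (E * k) - vstar‖ ≤ RR ∧ ‖x (E * k) - v (E * k)‖ ≤ rr := by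
    intro k
    induction k with
    | zero =>
      constructor
      · rw [Nat.mul_zero]; exact hbase
      · rw [Nat.mul_zero, hinit, sub_self, norm_zero]; exact hrr0
    | succ k ih =>
      obtain ⟨ha, hb⟩ := ih
      have hidx : E * (k + 1) = E * k + E := Nat.mul_succ E k
      rw [hidx]
      have hA' := hstepA k
      have hB' := hstepB k
      have m1 : ν ^ E * ‖x (E * k) - vstar‖ ≤ ν ^ E * RR :=
        mul_le_mul_of_nonneg_left ha hνEnn
      have m2 : β * ‖x (E * k) - v (E * k)‖ * σ'' ≤ β * rr * σ'' :=
        mul_le_mul_of_nonneg_right (mul_le_mul_of_nonneg_left hb hβ0) hσnn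
      have m3 : β * (Zn * ‖x (E * k) - v (E * k)‖) ≤ β * (Zn * rr) :=
        mul_le_mul_of_nonneg_left (mul_le_mul_of_nonneg_left hb hZn0) hβ0
      have mK : K * (ν ^ E * ‖x (E * k) - vstar‖ + β * ‖x (E * k) - v (E * k)‖ * σ'')
          ≤ K * (ν ^ E * RR + β * rr * σ'') :=
        mul_le_mul_of_nonneg_left (by linarith only [m1, m2]) hK0
      constructor
      · linarith only [hA', hconsA, m1, m2, m3]
      · linarith only [hB', hconsB, mK, m3]
  -- conclusion
  refine ⟨Zn * rr, mul_nonneg hZn0 hrr0, ?_⟩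
  intro k i
  have hmc : k * E = E * k := Nat.mul_comm k E
  rw [hmc]
  have hm := (main k).2
  have heq : (∑ j, Wbar i j • x (E * k) j) - ∑ j, Wbar i j • v (E * k) j
      = Z (x (E * k) - v (E * k)) i := by
    rw [hZ, ← Finset.sum_sub_distrib]
    refine Finset.sum_congr rfl fun j _ => ?_
    rw [PiLp.sub_apply, smul_sub]
  rw [heq]
  calc ‖Z (x (E * k) - v (E * k)) i‖ ≤ ‖Z (x (E * k) - v (E * k))‖ :=
        pi_apply_norm_le _ i
    _ ≤ Zn * ‖x (E * k) - v (E * k)‖ := by rw [hZndef]; exact Z.le_opNorm _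
    _ ≤ Zn * rr := mul_le_mul_of_nonneg_left hm hZn0
end

section
/- Let f : ℝ^p → ℝ be differentiable, μ-strongly convex and L-smooth (0 < μ ≤ L) with minimum value f*. Then for any vectors v, d ∈ ℝ^p, ⟨∇f(v + d), d⟩ ≥ (1/(2L))‖∇f(v + d)‖² − (1/(2μ))‖∇f(v)‖² + (μ/2)‖d‖². (Inequality (68-1) in the proof of the paper's Lemma 5, with d = β(x_j^{t⁰} − v_j^{t⁰}).) -/
open RealInnerProductSpace

/-- Inequality (68-1) in the proof of the paper's Lemma 5. -/
theorem inner_grad_shift_lower_bound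
    {p : ℕ}
    (f : EuclideanSpace ℝ (Fin p) → ℝ)
    (g : EuclideanSpace ℝ (Fin p) → EuclideanSpace ℝ (Fin p))
    (μ L : ℝ) (hμ : 0 < μ) (hμL : μ ≤ L)
    (hsc : ∀ x y, f x ≥ f y + ⟪x - y, g y⟫ + μ / 2 * ‖x - y‖ ^ 2)
    (hsm : ∀ x y, f x ≤ f y + ⟪x - y, g y⟫ + L / 2 * ‖x - y‖ ^ 2)
    (fstar : ℝ)
    (hfstar : ∀ y, fstar ≤ f y)
    (hattain : ∃ z, f z = fstar)
    (v d : EuclideanSpace ℝ (Fin p)) :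
    ⟪g (v + d), d⟫ ≥
      1 / (2 * L) * ‖g (v + d)‖ ^ 2 - 1 / (2 * μ) * ‖g v‖ ^ 2
      + μ / 2 * ‖d‖ ^ 2 := by
  have hL : 0 < L := hμ.trans_le hμL
  set x := v + d with hx
  -- A: strong convexity between v and x
  have hA : ⟪g x, d⟫ ≥ f x - f v + μ / 2 * ‖d‖ ^ 2 := by
    have h1 := hsc v x
    have hvx : v - x = -d := by rw [hx]; abel
    rw [hvx] at h1
    rw [inner_neg_left, norm_neg] at h1
    have : ⟪g x, d⟫ = ⟪d, g x⟫ := real_inner_comm _ _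
    linarith [h1, this]
  -- B: f x - fstar ≥ ‖g x‖²/(2L), via smoothness at x - (1/L) • g x
  have hB : f x - fstar ≥ 1 / (2 * L) * ‖g x‖ ^ 2 := by
    have h2 := hsm (x - (1 / L) • g x) x
    have h3 := hfstar (x - (1 / L) • g x)
    have hd : x - (1 / L) • g x - x = -((1 / L) • g x) := by abel
    rw [hd, inner_neg_left, norm_neg, real_inner_smul_left,
      real_inner_self_eq_norm_sq, norm_smul, Real.norm_eq_abs,
      abs_of_pos (by positivity : (0:ℝ) < 1 / L), mul_pow] at h2
    have hL' : L ≠ 0 := ne_of_gt hL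
    have : (1 / L : ℝ) ^ 2 = 1 / L ^ 2 := by field_simp
    rw [this] at h2
    have key : -(1 / L * ‖g x‖ ^ 2) + L / 2 * (1 / L ^ 2 * ‖g x‖ ^ 2)
        = -(1 / (2 * L) * ‖g x‖ ^ 2) := by field_simp; ring
    nlinarith [h2, h3, key]
  -- C: f v - fstar ≤ ‖g v‖²/(2μ)
  have hC : f v - fstar ≤ 1 / (2 * μ) * ‖g v‖ ^ 2 := by
    obtain ⟨z, hz⟩ := hattain
    have h4 := hsc z v
    rw [hz] at h4
    have h5 : (0:ℝ) ≤ ‖(z - v) + (1 / μ) • g v‖ ^ 2 := sq_nonneg _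
    rw [norm_add_sq_real, real_inner_smul_right,
      norm_smul, Real.norm_eq_abs, abs_of_pos (by positivity : (0:ℝ) < 1 / μ),
      mul_pow] at h5
    have hμ' : μ ≠ 0 := ne_of_gt hμ
    have e1 : (1 / μ : ℝ) ^ 2 = 1 / μ ^ 2 := by field_simp
    rw [e1] at h5
    have h6 : (0:ℝ) ≤ μ / 2 * ‖z - v‖ ^ 2 + ⟪z - v, g v⟫ + 1 / (2 * μ) * ‖g v‖ ^ 2 := by
      have h7 := mul_nonneg (by positivity : (0:ℝ) ≤ μ / 2) h5
      have e2 : μ / 2 * (‖z - v‖ ^ 2 + 2 * (1 / μ * ⟪z - v, g v⟫) + 1 / μ ^ 2 * ‖g v‖ ^ 2)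
          = μ / 2 * ‖z - v‖ ^ 2 + ⟪z - v, g v⟫ + 1 / (2 * μ) * ‖g v‖ ^ 2 := by
        field_simp
      linarith [h7, e2.symm ▸ h7]
    linarith [h4, h6]
  linarith
end

section
/- Let f : ℝ^p → ℝ be differentiable, μ-strongly convex and L-smooth (0 < μ ≤ L) with minimum value f*. Fix d ∈ ℝ^p, β ∈ [0,1], α > 0, and constants 0 ≤ G_min ≤ G_max, θ, Θ ≥ 0 with θ ≤ ‖d‖ ≤ Θ. Consider iterates x^{s+1} = x^s − α∇f(x^s) + βd for s = t⁰, t⁰+1, …, t−1, and set v^s = x^s − βd. If G_min ≤ ‖∇f(x^s)‖ ≤ G_max and ‖∇f(v^s)‖ ≤ G_max for all s in this range, then ‖x^t − x^{t⁰}‖² ≤ (t − t⁰)²Γ, where Γ = α²G_max² + Θ² + αG_max²/μ − αG_min²/L − μαβ²θ². (Inequality (68-3) in the proof of the paper's Lemma 5.) -/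
open RealInnerProductSpace

/-- Inequality (68-3) in the proof of the paper's Lemma 5. -/
theorem corrected_local_updates_drift_bound
    {p : ℕ}
    (f : EuclideanSpace ℝ (Fin p) → ℝ)
    (g : EuclideanSpace ℝ (Fin p) → EuclideanSpace ℝ (Fin p))
    (μ L : ℝ) (hμ : 0 < μ) (hμL : μ ≤ L)
    (hsc : ∀ x y, f x ≥ f y + ⟪x - y, g y⟫ + μ / 2 * ‖x - y‖ ^ 2)
    (hsm : ∀ x y, f x ≤ f y + ⟪x - y, g y⟫ + L / 2 * ‖x - y‖ ^ 2)
    (fstar : ℝ)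
    (hfstar : ∀ y, fstar ≤ f y)
    (hattain : ∃ z, f z = fstar)
    (d : EuclideanSpace ℝ (Fin p))
    (α β : ℝ) (hα0 : 0 < α) (hβ0 : 0 ≤ β) (hβ1 : β ≤ 1)
    (Gmin Gmax θ Θ : ℝ)
    (hGmin0 : 0 ≤ Gmin) (hGminmax : Gmin ≤ Gmax) (hθ0 : 0 ≤ θ) (hΘ0 : 0 ≤ Θ)
    (hdθ : θ ≤ ‖d‖) (hdΘ : ‖d‖ ≤ Θ)
    (t0 t : ℕ) (ht0t : t0 ≤ t)
    (x v : ℕ → EuclideanSpace ℝ (Fin p))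
    (hiter : ∀ s, t0 ≤ s → s < t → x (s + 1) = x s - α • g (x s) + β • d)
    (hvdef : ∀ s, t0 ≤ s → s < t → v s = x s - β • d)
    (hGx : ∀ s, t0 ≤ s → s < t → Gmin ≤ ‖g (x s)‖ ∧ ‖g (x s)‖ ≤ Gmax)
    (hGv : ∀ s, t0 ≤ s → s < t → ‖g (v s)‖ ≤ Gmax)
    (Γ : ℝ)
    (hΓ : Γ = α ^ 2 * Gmax ^ 2 + Θ ^ 2 + α * Gmax ^ 2 / μ - α * Gmin ^ 2 / L
        - μ * α * β ^ 2 * θ ^ 2) :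
    ‖x t - x t0‖ ^ 2 ≤ ((t - t0 : ℕ) : ℝ) ^ 2 * Γ := by
  have hL : 0 < L := lt_of_lt_of_le hμ hμL
  obtain ⟨z, hz⟩ := hattain
  have hPL : ∀ y, f y - fstar ≤ ‖g y‖ ^ 2 / (2 * μ) := by
    intro y
    have h := hsc z y
    have hab : ⟪z - y, g y⟫ ≥ -(‖z - y‖ * ‖g y‖) := by
      have := abs_real_inner_le_norm (z - y) (g y)
      cases abs_le.mp this with
      | intro h1 h2 => linarith
    have hsq := sq_nonneg (μ * ‖z - y‖ - ‖g y‖)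
    rw [hz] at h
    rw [le_div_iff₀ (by positivity : (0:ℝ) < 2 * μ)]
    nlinarith [hsq, hab, hμ]
  have hSL : ∀ y, ‖g y‖ ^ 2 / (2 * L) ≤ f y - fstar := by
    intro y
    have h := hsm (y - (1 / L) • g y) y
    have h1 : (y - (1 / L) • g y) - y = (-(1 / L)) • g y := by
      rw [neg_smul]; abel
    rw [h1, real_inner_smul_left, real_inner_self_eq_norm_sq, norm_smul,
      Real.norm_eq_abs, abs_neg, abs_of_pos (by positivity : (0:ℝ) < 1 / L)] at h
    have h2 : fstar ≤ f (y - (1 / L) • g y) := hfstar _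
    have e1 : f y + (-(1 / L)) * ‖g y‖ ^ 2 + L / 2 * (1 / L * ‖g y‖) ^ 2
        = f y - ‖g y‖ ^ 2 / (2 * L) := by field_simp; ring
    rw [e1] at h
    linarith
  have hstep : ∀ s, t0 ≤ s → s < t → ‖x (s + 1) - x s‖ ^ 2 ≤ Γ := by
    intro s hs1 hs2
    have hx := hiter s hs1 hs2
    have hdiff : x (s + 1) - x s = (-α) • g (x s) + β • d := by
      rw [hx, neg_smul]; abel
    rw [hdiff]
    have hexp : ‖(-α) • g (x s) + β • d‖ ^ 2
        = α ^ 2 * ‖g (x s)‖ ^ 2 + β ^ 2 * ‖d‖ ^ 2 - 2 * α * β * ⟪g (x s), d⟫ := by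
      rw [norm_add_sq_real, real_inner_smul_left, real_inner_smul_right,
        norm_smul, norm_smul, Real.norm_eq_abs, Real.norm_eq_abs, abs_neg,
        abs_of_pos hα0, abs_of_nonneg hβ0]
      ring
    rw [hexp]
    have hv := hvdef s hs1 hs2
    have hscv := hsc (v s) (x s)
    have hvx : v s - x s = (-β) • d := by rw [hv, neg_smul]; abel
    rw [hvx, real_inner_smul_left] at hscv
    have hnvx : ‖(-β) • d‖ ^ 2 = β ^ 2 * ‖d‖ ^ 2 := by
      rw [norm_smul, Real.norm_eq_abs, abs_neg, abs_of_nonneg hβ0]; ring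
    rw [hnvx, real_inner_comm] at hscv
    -- f-value bounds
    have h1 : f (v s) - fstar ≤ Gmax ^ 2 / (2 * μ) := by
      have hp := hPL (v s)
      have hg := hGv s hs1 hs2
      have hsq : ‖g (v s)‖ ^ 2 ≤ Gmax ^ 2 := pow_le_pow_left₀ (norm_nonneg _) hg 2
      have h3 : ‖g (v s)‖ ^ 2 / (2 * μ) ≤ Gmax ^ 2 / (2 * μ) := by gcongr
      linarith
    have h2 : Gmin ^ 2 / (2 * L) ≤ f (x s) - fstar := by
      have hp := hSL (x s)
      have hg := (hGx s hs1 hs2).1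
      have hsq : Gmin ^ 2 ≤ ‖g (x s)‖ ^ 2 := pow_le_pow_left₀ hGmin0 hg 2
      have h3 : Gmin ^ 2 / (2 * L) ≤ ‖g (x s)‖ ^ 2 / (2 * L) := by gcongr
      linarith
    have hgmax : α ^ 2 * ‖g (x s)‖ ^ 2 ≤ α ^ 2 * Gmax ^ 2 := by
      have hg := (hGx s hs1 hs2).2
      exact mul_le_mul_of_nonneg_left (pow_le_pow_left₀ (norm_nonneg _) hg 2) (sq_nonneg α)
    have hbd : β ^ 2 * ‖d‖ ^ 2 ≤ Θ ^ 2 := by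
      have e1 : β ^ 2 ≤ 1 := pow_le_one₀ hβ0 hβ1
      have e2 : ‖d‖ ^ 2 ≤ Θ ^ 2 := pow_le_pow_left₀ (norm_nonneg d) hdΘ 2
      calc β ^ 2 * ‖d‖ ^ 2 ≤ 1 * Θ ^ 2 :=
            mul_le_mul e1 e2 (by positivity) zero_le_one
        _ = Θ ^ 2 := one_mul _
    have hbth : θ ^ 2 ≤ ‖d‖ ^ 2 := pow_le_pow_left₀ hθ0 hdθ 2
    have c2 : f (v s) - f (x s) ≤ Gmax ^ 2 / (2 * μ) - Gmin ^ 2 / (2 * L) := by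
      linarith
    have heq : 2 * α * (Gmax ^ 2 / (2 * μ) - Gmin ^ 2 / (2 * L))
        = α * Gmax ^ 2 / μ - α * Gmin ^ 2 / L := by field_simp
    have c3 : 2 * α * (f (v s) - f (x s)) ≤ α * Gmax ^ 2 / μ - α * Gmin ^ 2 / L := by
      rw [← heq]
      exact mul_le_mul_of_nonneg_left c2 (by positivity)
    have base : -(β * ⟪g (x s), d⟫) ≤ f (v s) - f (x s) - μ / 2 * (β ^ 2 * ‖d‖ ^ 2) := by
      linarith [hscv]
    have c1' := mul_le_mul_of_nonneg_left base (by positivity : (0:ℝ) ≤ 2 * α)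
    have c1 : -(2 * α * β * ⟪g (x s), d⟫)
        ≤ 2 * α * (f (v s) - f (x s)) - α * μ * (β ^ 2 * ‖d‖ ^ 2) := by
      linarith [c1']
    have c4' := mul_le_mul_of_nonneg_left hbth
      (by positivity : (0:ℝ) ≤ μ * α * β ^ 2)
    have c4 : μ * α * β ^ 2 * θ ^ 2 ≤ α * μ * (β ^ 2 * ‖d‖ ^ 2) := by
      linarith [c4']
    rw [hΓ]
    linarith [hgmax, hbd, c1, c3, c4]
  rcases eq_or_lt_of_le ht0t with rfl | htlt
  · simp
  have hΓ0 : 0 ≤ Γ := le_trans (sq_nonneg _) (hstep t0 le_rfl htlt)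
  have key : ∀ n, t0 ≤ n → n ≤ t → ‖x n - x t0‖ ≤ ((n - t0 : ℕ) : ℝ) * Real.sqrt Γ := by
    intro n hn
    induction n, hn using Nat.le_induction with
    | base => intro _; simp
    | succ n hn ih =>
      intro hnt
      have hnt' : n < t := hnt
      have ih' := ih (le_of_lt hnt')
      have hstp : ‖x (n + 1) - x n‖ ≤ Real.sqrt Γ := by
        have h := Real.sqrt_le_sqrt (hstep n hn hnt')
        rwa [Real.sqrt_sq (norm_nonneg _)] at h
      calc ‖x (n + 1) - x t0‖ = ‖(x (n + 1) - x n) + (x n - x t0)‖ := by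
            congr 1; abel
        _ ≤ ‖x (n + 1) - x n‖ + ‖x n - x t0‖ := norm_add_le _ _
        _ ≤ Real.sqrt Γ + ((n - t0 : ℕ) : ℝ) * Real.sqrt Γ := add_le_add hstp ih'
        _ = ((n + 1 - t0 : ℕ) : ℝ) * Real.sqrt Γ := by
            rw [Nat.sub_add_comm hn, Nat.cast_add, Nat.cast_one]; ring
  have hk := key t ht0t le_rfl
  calc ‖x t - x t0‖ ^ 2 ≤ (((t - t0 : ℕ) : ℝ) * Real.sqrt Γ) ^ 2 :=
        pow_le_pow_left₀ (norm_nonneg _) hk 2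
    _ = ((t - t0 : ℕ) : ℝ) ^ 2 * Γ := by rw [mul_pow, Real.sq_sqrt hΓ0]
end
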